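/- arXiv:2208.09544 — 2 statements merged into one kernel-verified Lean document; each statement's English description precedes it below -/
import Mathlib

section
/- Let (y_n) be a nondecreasing sequence of positive integers with output array A(n,k) and row sums W(n) = Σ_{k=0}^{y_n} A(n,k). Then W(n) = A(n+1, y_n) for all n ≥ 1. -/
/-- `x : Fin n → ℕ` (0-indexed version of `(x_1,…,x_n)`) is a valid n-tuple for the
input sequence `y`: `x_1 ≤ y n` and `x_{j+1} ≤ min (x_j) (y (n - j))` for `1 ≤ j ≤ n-1`. -/
def IsValid (y : ℕ → ℕ) (n : ℕ) (x : Fin n → ℕ) : Prop :=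
  (∀ h : 0 < n, x ⟨0, h⟩ ≤ y n) ∧
  ∀ i : ℕ, ∀ h : i + 1 < n,
    x ⟨i + 1, h⟩ ≤ min (x ⟨i, Nat.lt_of_succ_lt h⟩) (y (n - (i + 1)))

/-- `A y n k` : number of valid n-tuples whose first entry equals `k`. -/
noncomputable def A (y : ℕ → ℕ) (n k : ℕ) : ℕ :=
  Nat.card {x : Fin n → ℕ // IsValid y n x ∧ ∀ h : 0 < n, x ⟨0, h⟩ = k}

/-- `W y n` : total number of valid n-tuples. -/
noncomputable def W (y : ℕ → ℕ) (n : ℕ) : ℕ :=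
  Nat.card {x : Fin n → ℕ // IsValid y n x}

lemma valid_bound {y : ℕ → ℕ} {n : ℕ} {x : Fin n → ℕ} (hv : IsValid y n x) :
    ∀ i : ℕ, ∀ h : i < n, x ⟨i, h⟩ ≤ y n := by
  intro i
  induction i with
  | zero => intro h; exact hv.1 h
  | succ i ih =>
    intro h
    exact le_trans (le_trans (hv.2 i h) (min_le_left _ _)) (ih (Nat.lt_of_succ_lt h))

lemma finiteValid (y : ℕ → ℕ) (n : ℕ) : Finite {x : Fin n → ℕ // IsValid y n x} := by
  let f : {x : Fin n → ℕ // IsValid y n x} → (Fin n → Fin (y n + 1)) :=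
    fun x i => ⟨x.1 i, Nat.lt_succ_of_le (by
      have := valid_bound x.2 i.1 i.2
      simpa using this)⟩
  have hf : Function.Injective f := by
    intro a b hab
    apply Subtype.ext
    funext i
    have := congrFun hab i
    simpa [f, Fin.ext_iff] using this
  exact Finite.of_injective f hf

lemma finiteFiber (y : ℕ → ℕ) (n k : ℕ) :
    Finite {x : Fin n → ℕ // IsValid y n x ∧ ∀ h : 0 < n, x ⟨0, h⟩ = k} := by
  have := finiteValid y n
  exact Finite.of_injective
    (fun x => (⟨x.1, x.2.1⟩ : {x : Fin n → ℕ // IsValid y n x}))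
    (by intro a b h; simp only [Subtype.mk.injEq] at h; exact Subtype.ext h)

lemma nat_card_sigma {ι : Type*} [Fintype ι] (f : ι → Type*) [∀ i, Finite (f i)] :
    Nat.card (Σ i, f i) = ∑ i, Nat.card (f i) := by
  classical
  letI : ∀ i, Fintype (f i) := fun i => Fintype.ofFinite _
  simp [Nat.card_eq_fintype_card]

theorem stmt10 (y : ℕ → ℕ) (hmono : ∀ m, 1 ≤ m → y m ≤ y (m + 1))
    (hpos : ∀ m, 1 ≤ m → 1 ≤ y m) (n : ℕ) (hn : 1 ≤ n) :
    W y n = ∑ k ∈ Finset.range (y n + 1), A y n k ∧ W y n = A y (n + 1) (y n) := by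
  constructor
  · -- partition by first coordinate
    have e : {x : Fin n → ℕ // IsValid y n x} ≃
        Σ k : Fin (y n + 1),
          {x : Fin n → ℕ // IsValid y n x ∧ ∀ h : 0 < n, x ⟨0, h⟩ = (k : ℕ)} :=
      { toFun := fun x =>
          ⟨⟨x.1 ⟨0, hn⟩, Nat.lt_succ_of_le (x.2.1 hn)⟩, ⟨x.1, x.2, fun _ => rfl⟩⟩
        invFun := fun s => ⟨s.2.1, s.2.2.1⟩
        left_inv := fun x => rfl
        right_inv := by
          rintro ⟨⟨kv, hkv⟩, x, hv, hk⟩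
          have h0 : x ⟨0, hn⟩ = kv := hk hn
          subst h0
          rfl }
    rw [W, Nat.card_congr e]
    haveI : ∀ k : Fin (y n + 1),
        Finite {x : Fin n → ℕ // IsValid y n x ∧ ∀ h : 0 < n, x ⟨0, h⟩ = (k : ℕ)} :=
      fun k => finiteFiber y n k
    rw [nat_card_sigma]
    rw [← Fin.sum_univ_eq_sum_range (fun k => A y n k) (y n + 1)]
    rfl
  · -- bijection with (n+1)-tuples starting with y n
    have e : {x : Fin n → ℕ // IsValid y n x} ≃
        {x : Fin (n + 1) → ℕ //
          IsValid y (n + 1) x ∧ ∀ h : 0 < n + 1, x ⟨0, h⟩ = y n} :=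
      { toFun := fun x => by
          refine ⟨Fin.cons (y n) x.1, ⟨⟨fun _ => hmono n hn, ?_⟩, fun _ => rfl⟩⟩
          intro i h
          match i with
          | 0 =>
            have : (⟨1, h⟩ : Fin (n + 1)) = Fin.succ ⟨0, hn⟩ := rfl
            rw [show (⟨0, Nat.lt_of_succ_lt h⟩ : Fin (n+1)) = (0 : Fin (n+1)) from rfl,
              this, Fin.cons_succ, Fin.cons_zero]
            simpa using le_min (x.2.1 hn) (x.2.1 hn)
          | (j + 1) =>
            have h1 : (⟨j + 2, h⟩ : Fin (n + 1)) = Fin.succ ⟨j + 1, Nat.lt_of_succ_lt_succ h⟩ := rfl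
            have h2 : (⟨j + 1, Nat.lt_of_succ_lt h⟩ : Fin (n + 1)) =
                Fin.succ ⟨j, Nat.lt_of_succ_lt (Nat.lt_of_succ_lt_succ h)⟩ := rfl
            rw [h1, h2, Fin.cons_succ, Fin.cons_succ]
            have := x.2.2 j (Nat.lt_of_succ_lt_succ h)
            simpa [Nat.succ_sub_succ] using this
        invFun := fun z => by
          refine ⟨fun i => z.1 i.succ, ?_, ?_⟩
          · intro h
            have h1 := z.2.1.2 0 (Nat.succ_lt_succ hn)
            have h0 : (z.1 ⟨0, Nat.lt_of_succ_lt (Nat.succ_lt_succ hn)⟩ : ℕ) = y n :=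
              z.2.2 _
            rw [h0] at h1
            simpa using h1
          · intro i h
            have := z.2.1.2 (i + 1) (Nat.succ_lt_succ h)
            simpa [Fin.succ, Nat.succ_sub_succ] using this
        left_inv := fun x => by
          apply Subtype.ext
          funext i
          simp
        right_inv := fun z => by
          apply Subtype.ext
          funext i
          match i with
          | ⟨0, h⟩ =>
            simpa using (z.2.2 h).symm
          | ⟨j + 1, h⟩ =>
            exact Fin.cons_succ (α := fun _ : Fin (n + 1) => ℕ) (y n) (fun i : Fin n => z.1 i.succ)
              ⟨j, Nat.lt_of_succ_lt_succ h⟩ }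
    rw [W, Nat.card_congr e, A]
end

section
/- Let A(n,k) be the output array of the identity sequence y_n = n. Then A(n,k) = C(n+k, k) · (n-k+1)/(n+1) for 0 ≤ k ≤ n (the ballot numbers of the Catalan triangle). -/
/-! Dropping the first entry `k` of a valid `(n + 2)`-tuple leaves a valid `(n + 1)`-tuple with
first entry at most `k`, so `A (n + 2) k = ∑_{j ≤ k} A (n + 1) j`. The ballot numbers satisfy
the same recursion (by Pascal's rule and `C(N, k + 1) (k + 1) = C(N, k) (N - k)`), and they agree
with `A` for `n = 1`. -/

open Finset

theorem Nat.card_subtype_and_le_eq_sum {α : Type*} (P : α → Prop) (f : α → ℕ) (k : ℕ)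
    (hfin : ∀ j, Finite {a // P a ∧ f a = j}) :
    Nat.card {a // P a ∧ f a ≤ k} =
      ∑ j ∈ range (k + 1), Nat.card {a // P a ∧ f a = j} := by
  let g : {a // P a ∧ f a ≤ k} → Fin (k + 1) := fun a => ⟨f a, Nat.lt_succ_of_le a.2.2⟩
  have fiber (j : Fin (k + 1)) : {a // g a = j} ≃ {a // P a ∧ f a = j} :=
    (Equiv.subtypeEquivRight fun a => by simp [g, Fin.ext_iff, a.2.1]).trans
      (Equiv.subtypeSubtypeEquivSubtype fun h => ⟨h.1, h.2 ▸ j.is_le⟩)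
  have : ∀ j, Finite {a // g a = j} := fun j => Finite.of_equiv _ (fiber j).symm
  rw [← Fin.sum_univ_eq_sum_range (fun j => Nat.card {a // P a ∧ f a = j}),
    ← Nat.card_congr (Equiv.sigmaFiberEquiv g), Nat.card_sigma]
  exact sum_congr rfl fun j _ => Nat.card_congr (fiber j)

theorem A_succ_eq_card (y : ℕ → ℕ) (n k : ℕ) :
    A y (n + 1) k = Nat.card {x : Fin (n + 1) → ℕ // IsValid y (n + 1) x ∧ x 0 = k} :=
  Nat.card_congr (Equiv.subtypeEquivRight fun x => by simp)

theorem IsValid.apply_le_apply_zero {y : ℕ → ℕ} {n : ℕ} {x : Fin (n + 1) → ℕ}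
    (hx : IsValid y (n + 1) x) :
    ∀ i, x i ≤ x 0 := by
  rintro ⟨i, hi⟩
  induction i with
  | zero => rfl
  | succ i ih => exact ((hx.2 i hi).trans (min_le_left _ _)).trans (ih (by omega))

theorem finite_isValid_and_apply_zero_eq (y : ℕ → ℕ) (n k : ℕ) :
    Finite {x : Fin (n + 1) → ℕ // IsValid y (n + 1) x ∧ x 0 = k} :=
  Finite.of_injective
    (fun x i => (⟨x.1 i, Nat.lt_succ_of_le ((x.2.1.apply_le_apply_zero i).trans_eq x.2.2)⟩ :
      Fin (k + 1)))
    fun _ _ h => Subtype.ext (funext fun i => congrArg Fin.val (congrFun h i))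

theorem isValid_cons_iff {y : ℕ → ℕ} {n a : ℕ} {t : Fin (n + 1) → ℕ} :
    IsValid y (n + 2) (Fin.cons a t) ↔ a ≤ y (n + 2) ∧ t 0 ≤ a ∧ IsValid y (n + 1) t := by
  have e (i : ℕ) : n + 2 - (i + 1 + 1) = n + 1 - (i + 1) := by omega
  constructor
  · rintro ⟨ha, hs⟩
    have h0 : t 0 ≤ min a (y (n + 1)) := hs 0 (Nat.succ_lt_succ n.succ_pos)
    exact ⟨ha (Nat.succ_pos _), h0.trans (min_le_left _ _),
      fun _ => h0.trans (min_le_right _ _), fun i hi => e i ▸ hs (i + 1) (by omega)⟩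
  · rintro ⟨ha, h0, ht0, hs⟩
    refine ⟨fun _ => ha, fun i hi => ?_⟩
    cases i with
    | zero => exact le_min h0 (ht0 (by omega))
    | succ i => exact (e i).symm ▸ hs i (by omega)

def tailEquiv (y : ℕ → ℕ) (n k : ℕ) (hk : k ≤ y (n + 2)) :
    {x : Fin (n + 2) → ℕ // IsValid y (n + 2) x ∧ x 0 = k} ≃
      {t : Fin (n + 1) → ℕ // IsValid y (n + 1) t ∧ t 0 ≤ k} where
  toFun x := ⟨Fin.tail x.1, by
    obtain ⟨-, h0, ht⟩ := isValid_cons_iff.1 ((Fin.cons_self_tail x.1).symm ▸ x.2.1)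
    exact ⟨ht, h0.trans_eq x.2.2⟩⟩
  invFun t := ⟨Fin.cons k t.1, isValid_cons_iff.2 ⟨hk, t.2.2, t.2.1⟩, Fin.cons_zero _ _⟩
  left_inv x := Subtype.ext (x.2.2 ▸ Fin.cons_self_tail x.1)
  right_inv _ := rfl

theorem A_add_two (y : ℕ → ℕ) (n k : ℕ) (hk : k ≤ y (n + 2)) :
    A y (n + 2) k = ∑ j ∈ range (k + 1), A y (n + 1) j := by
  simp only [A_succ_eq_card]
  rw [Nat.card_congr (tailEquiv y n k hk),
    Nat.card_subtype_and_le_eq_sum _ _ _ (finite_isValid_and_apply_zero_eq y n)]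

theorem A_one (y : ℕ → ℕ) (k : ℕ) (hk : k ≤ y 1) : A y 1 k = 1 := by
  rw [A_succ_eq_card, Nat.card_eq_one_iff_exists]
  exact ⟨⟨fun _ => k, ⟨fun _ => hk, fun i hi => absurd hi (by omega)⟩, rfl⟩,
    fun x => Subtype.ext (funext fun i => by rw [Fin.fin_one_eq_zero i]; exact x.2.2)⟩

theorem A_eq_zero_of_lt (y : ℕ → ℕ) (n k : ℕ) (hk : y (n + 1) < k) : A y (n + 1) k = 0 := by
  rw [A_succ_eq_card, Nat.card_eq_zero]
  exact Or.inl ⟨fun x => (x.2.2 ▸ x.2.1.1 n.succ_pos).not_gt hk⟩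

theorem sum_range_choose_mul_sub (m k : ℕ) (hk : k ≤ m + 1) :
    (m + 2) * ∑ j ∈ range (k + 1), (m + j).choose j * (m + 1 - j) =
      (m + 1) * ((m + 1 + k).choose k * (m + 2 - k)) := by
  induction k with
  | zero => simp [mul_comm]
  | succ k ih =>
    rw [sum_range_succ, mul_add, ih (by omega)]
    have pascal :
        (m + 2 + k).choose (k + 1) = (m + 1 + k).choose k + (m + 1 + k).choose (k + 1) := by
      rw [show m + 2 + k = m + 1 + k + 1 by omega, Nat.choose_succ_succ']
    have absorb : (m + 1 + k).choose (k + 1) * (k + 1) = (m + 1 + k).choose k * (m + 1) := by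
      rw [Nat.choose_succ_right_eq, show m + 1 + k - k = m + 1 by omega]
    rw [show m + (k + 1) = m + 1 + k by omega, show m + 1 + (k + 1) = m + 2 + k by omega, pascal]
    zify [show k + 1 ≤ m + 1 by omega, show k ≤ m + 2 by omega,
      show k + 1 ≤ m + 2 by omega] at absorb ⊢
    linear_combination -absorb

/- In the form `n + 2 - k` the formula also covers `k = n + 2`, where both sides vanish;
the induction step sums it up to that index. -/
theorem add_two_mul_A_id (n k : ℕ) (hk : k ≤ n + 2) :
    (n + 2) * A (fun m => m) (n + 1) k = (n + 1 + k).choose k * (n + 2 - k) := by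
  induction n generalizing k with
  | zero =>
    interval_cases k <;> simp [A_one, A_eq_zero_of_lt]
  | succ n ih =>
    rcases hk.lt_or_eq with hk | rfl
    · apply Nat.eq_of_mul_eq_mul_left (show 0 < n + 2 by omega)
      calc (n + 2) * ((n + 3) * A (fun m => m) (n + 2) k)
          = (n + 3) * ∑ j ∈ range (k + 1), (n + 2) * A (fun m => m) (n + 1) j := by
            rw [A_add_two _ _ _ (by omega), ← mul_sum]; ring
        _ = (n + 3) * ∑ j ∈ range (k + 1), (n + 1 + j).choose j * (n + 2 - j) := by
            congr 1
            exact sum_congr rfl fun j hj => ih j (by rw [mem_range] at hj; omega)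
        _ = (n + 2) * ((n + 2 + k).choose k * (n + 3 - k)) :=
            sum_range_choose_mul_sub (n + 1) k (by omega)
    · simp [A_eq_zero_of_lt]

theorem stmt14 (n k : ℕ) (hn : 1 ≤ n) (hk : k ≤ n) :
    (n + 1) * A (fun m => m) n k = (n + k).choose k * (n - k + 1) := by
  obtain ⟨n, rfl⟩ : ∃ m, n = m + 1 := ⟨n - 1, by omega⟩
  rw [show n + 1 - k + 1 = n + 2 - k by omega]
  exact add_two_mul_A_id n k (by omega)
end
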